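/- arXiv:2011.07258 — 2 statements merged into one kernel-verified Lean document; each statement's English description precedes it below -/
import Mathlib

section
/- A pair (ρ̄, φ̄) with ρ̄ ∈ C¹([0,∞)), φ̄ ∈ C²([0,∞)) and ρ̄ > 0 is a classical solution of the stationary problem if and only if it satisfies the first-order problem: ρ̄(0) = ρ₋, ρ̄(x) → ρ₊ as x → +∞, φ̄(x) = F(ρ̄(x)) + φ₊ for all x ≥ 0, and for all x > 0, ρ̄'(x) = −√(G(ρ̄(x)))/F'(ρ̄(x)) in the case φ₋ > φ₊ (respectively ρ̄'(x) = +√(G(ρ̄(x)))/F'(ρ̄(x)) in the case φ₋ < φ₊). -/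
/-!
The first equation reads `φ̄' = F'(ρ̄) ρ̄'`, so `φ̄ - F(ρ̄)` is constant, equal to `φ₊` by the limits at
infinity. The second then reads `φ̄'' = H(ρ̄)`, so the energy `φ̄'² - G(ρ̄)` is constant; it is `0`
because `G(ρ̄) → 0` and `φ̄' → 0` along a sequence. For the sign of `φ̄'`: `F` and `H` have the same
sign, so `u = φ̄ - φ₊` satisfies `u u'' ≥ 0`. Hence `u u'` increases to its limit `0`, so `u²`
decreases, `u` never changes sign, and `u u' ≤ 0` forces `φ̄' ≤ 0` when `φ₋ > φ₊` (`φ̄' ≥ 0` when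
`φ₋ < φ₊`).

Conversely `φ̄ = F(ρ̄) + φ₊` gives `φ̄' = ±√G(ρ̄)`. Its derivative is `H(ρ̄)` where `G(ρ̄) > 0`, by
the chain rule, and `0 = H(ρ₊)` where `G(ρ̄) = 0`, since there `±φ̄' = √G(ρ̄) ≥ 0` is minimal.
-/

open MeasureTheory Set Filter Topology

noncomputable section

/-- `F(s) = ∫_{ρ₊}^s p'(τ)/(μ τ) dτ`. -/
def Ffun (p : ℝ → ℝ) (μ ρp s : ℝ) : ℝ :=
  ∫ τ in ρp..s, deriv p τ / (μ * τ)

/-- `H(s) = b F(s) + b φ₊ - a s`. -/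
def Hfun (p : ℝ → ℝ) (μ a b ρp φp s : ℝ) : ℝ :=
  b * Ffun p μ ρp s + b * φp - a * s

/-- `G(s) = ∫_{ρ₊}^s 2 F'(τ) H(τ) dτ`. -/
def Gfun (p : ℝ → ℝ) (μ a b ρp φp s : ℝ) : ℝ :=
  ∫ τ in ρp..s, 2 * (deriv p τ / (μ * τ)) * Hfun p μ a b ρp φp τ

/-- The structural condition `φ₋ - φ₊ + ∫₀^{ρ₊} p'(s)/(μ s) ds > 0`. -/
def CondPlus (p : ℝ → ℝ) (μ ρp φp φm : ℝ) : Prop :=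
  ¬ IntegrableOn (fun s => deriv p s / (μ * s)) (Set.Ioo 0 ρp) ∨
    0 < φm - φp + ∫ s in Set.Ioo 0 ρp, deriv p s / (μ * s)

lemma eq_of_hasDerivAt_eq_zero_of_continuousOn_Ici {f : ℝ → ℝ} {a x : ℝ}
    (hf : ContinuousOn f (Ici a)) (hf' : ∀ y, a < y → HasDerivAt f 0 y) (hx : a ≤ x) :
    f x = f a := by
  rcases hx.eq_or_lt with rfl | hax
  · rfl
  obtain ⟨c, -, hslope⟩ := exists_hasDerivAt_eq_slope f (fun _ => 0) hax
    (hf.mono Icc_subset_Ici_self) fun y hy => hf' y hy.1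
  rw [eq_comm, div_eq_zero_iff, sub_eq_zero] at hslope
  exact hslope.resolve_right (sub_ne_zero.2 hax.ne')

/-- `c x` is a mean value point of `f` on `[x, x + 1]`. -/
lemma exists_tendsto_deriv_comp_zero {f : ℝ → ℝ} {L : ℝ} (hf : Tendsto f atTop (𝓝 L))
    (hd : ∀ᶠ x in atTop, DifferentiableAt ℝ f x) :
    ∃ c : ℝ → ℝ, Tendsto c atTop atTop ∧ Tendsto (deriv f ∘ c) atTop (𝓝 0) := by
  obtain ⟨X, hX⟩ := eventually_atTop.1 hd
  have hmvt : ∀ x, ∃ c, x ≤ c ∧ (X ≤ x → deriv f c = f (x + 1) - f x) := by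
    intro x
    by_cases hx : X ≤ x
    · obtain ⟨c, hc, hslope⟩ := exists_deriv_eq_slope f (lt_add_one x)
        (fun y hy => (hX y (hx.trans hy.1)).continuousAt.continuousWithinAt)
        (fun y hy => (hX y (hx.trans hy.1.le)).differentiableWithinAt)
      exact ⟨c, hc.1.le, fun _ => by simpa using hslope⟩
    · exact ⟨x, le_rfl, fun h => absurd h hx⟩
  choose c hc_ge hc_eq using hmvt
  refine ⟨c, tendsto_atTop_mono hc_ge tendsto_id, ?_⟩
  have hstep : Tendsto (fun x => f (x + 1) - f x) atTop (𝓝 0) := by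
    simpa using (hf.comp (tendsto_atTop_add_const_right _ 1 tendsto_id)).sub hf
  refine hstep.congr' ?_
  filter_upwards [eventually_ge_atTop X] with x hx
  exact (hc_eq x hx).symm

lemma sub_mul_deriv_nonpos_of_tendsto {u : ℝ → ℝ} {L : ℝ}
    (hd : ∀ x, 0 < x → DifferentiableAt ℝ u x)
    (hd' : ∀ x, 0 < x → DifferentiableAt ℝ (deriv u) x)
    (hconv : ∀ x, 0 < x → 0 ≤ (u x - L) * deriv (deriv u) x)
    (hu : Tendsto u atTop (𝓝 L)) (hu' : Tendsto (deriv u) atTop (𝓝 0)) {x : ℝ} (hx : 0 < x) :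
    (u x - L) * deriv u x ≤ 0 := by
  have hg : ∀ y, 0 < y → HasDerivAt (fun y => (u y - L) * deriv u y)
      (deriv u y * deriv u y + (u y - L) * deriv (deriv u) y) y :=
    fun y hy => ((hd y hy).hasDerivAt.sub_const L).mul (hd' y hy).hasDerivAt
  have hmono : MonotoneOn (fun y => (u y - L) * deriv u y) (Ioi 0) := by
    refine monotoneOn_of_deriv_nonneg (convex_Ioi 0)
      (fun y hy => (hg y hy).continuousAt.continuousWithinAt) ?_ ?_ <;> rw [interior_Ioi]
    · exact fun y hy => (hg y hy).differentiableAt.differentiableWithinAt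
    · intro y hy
      rw [(hg y hy).deriv]
      nlinarith [hconv y hy, mul_self_nonneg (deriv u y)]
  have hlim : Tendsto (fun y => (u y - L) * deriv u y) atTop (𝓝 0) := by
    simpa using (hu.sub_const L).mul hu'
  refine ge_of_tendsto hlim ?_
  filter_upwards [eventually_ge_atTop x] with y hy
  exact hmono hx (hx.trans_le hy) hy

/-- `(u - L)²` decreases, so `u` cannot cross `L`; where `u = L`, `u` has a minimum. -/
lemma deriv_nonpos_of_sub_mul_deriv_nonpos {u : ℝ → ℝ} {L : ℝ} (hc : ContinuousOn u (Ici 0))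
    (hd : ∀ x, 0 < x → DifferentiableAt ℝ u x) (h0 : L ≤ u 0)
    (hmul : ∀ x, 0 < x → (u x - L) * deriv u x ≤ 0) {x : ℝ} (hx : 0 < x) : deriv u x ≤ 0 := by
  have hsq : AntitoneOn (fun y => (u y - L) ^ 2) (Ici 0) := by
    refine antitoneOn_of_deriv_nonpos (convex_Ici 0) ((hc.sub continuousOn_const).pow 2) ?_ ?_ <;>
      rw [interior_Ici]
    · exact fun y hy => (((hd y hy).sub_const L).pow 2).differentiableWithinAt
    · intro y hy
      rw [(((hd y hy).hasDerivAt.sub_const L).fun_pow 2).deriv]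
      simp only [Nat.cast_ofNat, Nat.add_one_sub_one, pow_one]
      nlinarith [hmul y hy]
  have hge : ∀ y, 0 ≤ y → L ≤ u y := by
    intro y hy
    by_contra! hlt
    obtain ⟨z, hz, hzL⟩ :=
      intermediate_value_Icc' hy (hc.mono Icc_subset_Ici_self) ⟨hlt.le, h0⟩
    have hle : (u y - L) ^ 2 ≤ (u z - L) ^ 2 := hsq hz.1 hy hz.2
    rw [hzL, sub_self] at hle
    nlinarith
  rcases (hge x hx.le).eq_or_lt with hL | hgt
  · have hmin : IsLocalMin u x := by
      filter_upwards [Ioi_mem_nhds hx] with y hy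
      rw [← hL]
      exact hge y (le_of_lt hy)
    exact hmin.deriv_eq_zero.le
  · exact nonpos_of_mul_nonpos_right (hmul x hx) (sub_pos.2 hgt)

lemma deriv_nonneg_of_sub_mul_deriv_nonpos {u : ℝ → ℝ} {L : ℝ} (hc : ContinuousOn u (Ici 0))
    (hd : ∀ x, 0 < x → DifferentiableAt ℝ u x) (h0 : u 0 ≤ L)
    (hmul : ∀ x, 0 < x → (u x - L) * deriv u x ≤ 0) {x : ℝ} (hx : 0 < x) : 0 ≤ deriv u x := by
  have hneg := deriv_nonpos_of_sub_mul_deriv_nonpos (u := fun y => -u y) (L := -L) hc.neg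
    (fun y hy => (hd y hy).neg) (neg_le_neg h0)
    (fun y hy => by rw [deriv.fun_neg]; linarith [hmul y hy]) hx
  rwa [deriv.fun_neg, neg_nonpos] at hneg

lemma hasDerivAt_integral_of_continuousOn {E : Type*} [NormedAddCommGroup E] [NormedSpace ℝ E]
    [CompleteSpace E] {g : ℝ → E} {U : Set ℝ} {c s : ℝ}
    (hg : ContinuousOn g U) (hU : IsOpen U) (hcs : uIcc c s ⊆ U) :
    HasDerivAt (fun t => ∫ τ in c..t, g τ) (g s) s :=
  have hs : s ∈ U := hcs right_mem_uIcc
  intervalIntegral.integral_hasDerivAt_right ((hg.mono hcs).intervalIntegrable)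
    (hg.stronglyMeasurableAtFilter hU s hs) (hg.continuousAt (hU.mem_nhds hs))

lemma Ffun_self (p : ℝ → ℝ) (μ ρp : ℝ) : Ffun p μ ρp ρp = 0 := by
  simp [Ffun]

lemma Gfun_self (p : ℝ → ℝ) (μ a b ρp φp : ℝ) : Gfun p μ a b ρp φp ρp = 0 := by
  simp [Gfun]

structure StationaryAssumptions (p : ℝ → ℝ) (μ a b ρp φp : ℝ) : Prop where
  mu_pos : 0 < μ
  a_pos : 0 < a
  b_pos : 0 < b
  contDiffOn : ContDiffOn ℝ 1 p (Ioi 0)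
  lt_deriv : ∀ ρ, 0 < ρ → a * μ / b * ρ < deriv p ρ
  rhop_pos : 0 < ρp
  balance : a * ρp = b * φp

namespace StationaryAssumptions

variable {p : ℝ → ℝ} {μ a b ρp φp : ℝ} (h : StationaryAssumptions p μ a b ρp φp) {s : ℝ}
include h

lemma differentiableAt (hs : 0 < s) : DifferentiableAt ℝ p s :=
  (h.contDiffOn.differentiableOn one_ne_zero).differentiableAt (Ioi_mem_nhds hs)

lemma continuousOn_Fderiv : ContinuousOn (fun τ => deriv p τ / (μ * τ)) (Ioi 0) :=
  (h.contDiffOn.continuousOn_deriv_of_isOpen isOpen_Ioi le_rfl).div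
    (continuousOn_const.mul continuousOn_id) fun _ hτ => (mul_pos h.mu_pos hτ).ne'

lemma a_lt_mul_Fderiv (hs : 0 < s) : a < b * (deriv p s / (μ * s)) := by
  have hlt := h.lt_deriv s hs
  rw [mul_div_assoc', lt_div_iff₀ (mul_pos h.mu_pos hs)]
  rw [div_mul_eq_mul_div, div_lt_iff₀ h.b_pos] at hlt
  linarith

lemma Fderiv_pos (hs : 0 < s) : 0 < deriv p s / (μ * s) :=
  pos_of_mul_pos_right (h.a_pos.trans (h.a_lt_mul_Fderiv hs)) h.b_pos.le

lemma hasDerivAt_Ffun (hs : 0 < s) : HasDerivAt (Ffun p μ ρp) (deriv p s / (μ * s)) s :=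
  hasDerivAt_integral_of_continuousOn h.continuousOn_Fderiv isOpen_Ioi
    (ordConnected_Ioi.uIcc_subset h.rhop_pos hs)

lemma continuousOn_Ffun : ContinuousOn (Ffun p μ ρp) (Ioi 0) :=
  fun _ hs => (h.hasDerivAt_Ffun hs).continuousAt.continuousWithinAt

lemma tendsto_Ffun_comp {α : Type*} {l : Filter α} {ρ : α → ℝ} (hρ : Tendsto ρ l (𝓝 ρp)) :
    Tendsto (fun x => Ffun p μ ρp (ρ x)) l (𝓝 0) := by
  have hF := (h.hasDerivAt_Ffun h.rhop_pos).continuousAt.tendsto.comp hρ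
  rwa [Ffun_self] at hF

lemma strictMonoOn_Ffun : StrictMonoOn (Ffun p μ ρp) (Ioi 0) :=
  strictMonoOn_of_deriv_pos (convex_Ioi 0) h.continuousOn_Ffun fun s hs => by
    rw [interior_Ioi] at hs
    rw [(h.hasDerivAt_Ffun hs).deriv]
    exact h.Fderiv_pos hs

lemma hasDerivAt_Hfun (hs : 0 < s) :
    HasDerivAt (Hfun p μ a b ρp φp) (b * (deriv p s / (μ * s)) - a) s :=
  (((h.hasDerivAt_Ffun hs).const_mul b).add_const _).sub
    (by simpa using (hasDerivAt_id s).const_mul a)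

lemma Hfun_self : Hfun p μ a b ρp φp ρp = 0 := by
  simp [Hfun, Ffun_self, h.balance]

lemma strictMonoOn_Hfun : StrictMonoOn (Hfun p μ a b ρp φp) (Ioi 0) :=
  strictMonoOn_of_deriv_pos (convex_Ioi 0)
    (fun _ hs => (h.hasDerivAt_Hfun hs).continuousAt.continuousWithinAt) fun s hs => by
    rw [interior_Ioi] at hs
    rw [(h.hasDerivAt_Hfun hs).deriv, sub_pos]
    exact h.a_lt_mul_Fderiv hs

lemma Ffun_mul_Hfun_nonneg (hs : 0 < s) :
    0 ≤ Ffun p μ ρp s * Hfun p μ a b ρp φp s := by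
  have hρp : ρp ∈ Ioi (0 : ℝ) := h.rhop_pos
  rcases le_total s ρp with hle | hge
  · refine mul_nonneg_of_nonpos_of_nonpos ?_ ?_
    · simpa [Ffun_self] using h.strictMonoOn_Ffun.monotoneOn hs hρp hle
    · simpa [h.Hfun_self] using h.strictMonoOn_Hfun.monotoneOn hs hρp hle
  · refine mul_nonneg ?_ ?_
    · simpa [Ffun_self] using h.strictMonoOn_Ffun.monotoneOn hρp hs hge
    · simpa [h.Hfun_self] using h.strictMonoOn_Hfun.monotoneOn hρp hs hge

lemma hasDerivAt_Gfun (hs : 0 < s) :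
    HasDerivAt (Gfun p μ a b ρp φp)
      (2 * (deriv p s / (μ * s)) * Hfun p μ a b ρp φp s) s :=
  hasDerivAt_integral_of_continuousOn
    ((continuousOn_const.mul h.continuousOn_Fderiv).mul
      fun _ ht => (h.hasDerivAt_Hfun ht).continuousAt.continuousWithinAt)
    isOpen_Ioi (ordConnected_Ioi.uIcc_subset h.rhop_pos hs)

lemma tendsto_Gfun_comp {α : Type*} {l : Filter α} {ρ : α → ℝ} (hρ : Tendsto ρ l (𝓝 ρp)) :
    Tendsto (fun x => Gfun p μ a b ρp φp (ρ x)) l (𝓝 0) := by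
  have hG := (h.hasDerivAt_Gfun h.rhop_pos).continuousAt.tendsto.comp hρ
  rwa [Gfun_self] at hG

/-- `G' = 2 F' H` has the sign of `s - ρ₊`. -/
lemma Gfun_pos (hs : 0 < s) (hne : s ≠ ρp) : 0 < Gfun p μ a b ρp φp s := by
  have hρp : ρp ∈ Ioi (0 : ℝ) := h.rhop_pos
  have hcont : ContinuousOn (Gfun p μ a b ρp φp) (Ioi 0) :=
    fun _ ht => (h.hasDerivAt_Gfun ht).continuousAt.continuousWithinAt
  rw [← Gfun_self p μ a b ρp φp]
  rcases hne.lt_or_gt with hlt | hgt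
  · refine strictAntiOn_of_deriv_neg (convex_Ioc 0 ρp) (hcont.mono Ioc_subset_Ioi_self)
      (fun t ht => ?_) ⟨hs, hlt.le⟩ ⟨hρp, le_rfl⟩ hlt
    rw [interior_Ioc] at ht
    have hH : Hfun p μ a b ρp φp t < 0 := by
      simpa [h.Hfun_self] using h.strictMonoOn_Hfun ht.1 hρp ht.2
    rw [(h.hasDerivAt_Gfun ht.1).deriv]
    nlinarith [h.Fderiv_pos ht.1]
  · refine strictMonoOn_of_deriv_pos (convex_Ici ρp)
      (hcont.mono (Ici_subset_Ioi.2 hρp)) (fun t ht => ?_) self_mem_Ici hgt.le hgt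
    rw [interior_Ici] at ht
    have ht0 : 0 < t := hρp.trans ht
    have hH : 0 < Hfun p μ a b ρp φp t := by
      simpa [h.Hfun_self] using h.strictMonoOn_Hfun hρp ht0 ht
    rw [(h.hasDerivAt_Gfun ht0).deriv]
    nlinarith [h.Fderiv_pos ht0]

variable {ρ φ : ℝ → ℝ}

lemma deriv_comp_eq_iff {x : ℝ} (hx : 0 < ρ x) (hρ : DifferentiableAt ℝ ρ x) :
    deriv (fun y => p (ρ y)) x = μ * ρ x * deriv φ x ↔
      deriv φ x = deriv p (ρ x) / (μ * ρ x) * deriv ρ x := by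
  have hchain : HasDerivAt (fun y => p (ρ y)) (deriv p (ρ x) * deriv ρ x) x :=
    (h.differentiableAt hx).hasDerivAt.comp x hρ.hasDerivAt
  rw [hchain.deriv, div_mul_eq_mul_div, eq_div_iff (mul_pos h.mu_pos hx).ne',
    mul_comm (deriv φ x), eq_comm]

lemma eq_Ffun_comp_add (hρc : ContinuousOn ρ (Ici 0))
    (hρd : ∀ x, 0 < x → DifferentiableAt ℝ ρ x) (hρpos : ∀ x, 0 ≤ x → 0 < ρ x)
    (hφc : ContinuousOn φ (Ici 0)) (hφd : ∀ x, 0 < x → DifferentiableAt ℝ φ x)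
    (hφ' : ∀ x, 0 < x → deriv φ x = deriv p (ρ x) / (μ * ρ x) * deriv ρ x)
    (hρ : Tendsto ρ atTop (𝓝 ρp)) (hφ : Tendsto φ atTop (𝓝 φp)) {x : ℝ} (hx : 0 ≤ x) :
    φ x = Ffun p μ ρp (ρ x) + φp := by
  set ψ := fun y => φ y - Ffun p μ ρp (ρ y)
  have hψ' : ∀ y, 0 < y → HasDerivAt ψ 0 y := fun y hy => by
    have hd := (hφd y hy).hasDerivAt.sub
      ((h.hasDerivAt_Ffun (hρpos y hy.le)).comp y (hρd y hy).hasDerivAt)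
    rwa [hφ' y hy, sub_self] at hd
  have hψc : ContinuousOn ψ (Ici 0) :=
    hφc.sub (h.continuousOn_Ffun.comp hρc fun y hy => hρpos y hy)
  have hconst : ∀ y, 0 ≤ y → ψ y = ψ 0 := fun y hy =>
    eq_of_hasDerivAt_eq_zero_of_continuousOn_Ici hψc hψ' hy
  have hψ0 : ψ 0 = φp := by
    refine tendsto_nhds_unique (tendsto_const_nhds.congr' ?_)
      (by simpa using hφ.sub (h.tendsto_Ffun_comp hρ))
    filter_upwards [eventually_ge_atTop 0] with y hy
    exact (hconst y hy).symm
  have hψx := (hconst x hx).trans hψ0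
  simp only [ψ] at hψx
  linarith

lemma deriv_sq_eq_Gfun (hρd : ∀ x, 0 < x → DifferentiableAt ℝ ρ x)
    (hρpos : ∀ x, 0 < x → 0 < ρ x) (hφd : ∀ x, 0 < x → DifferentiableAt ℝ φ x)
    (hφd' : ∀ x, 0 < x → DifferentiableAt ℝ (deriv φ) x)
    (hφ' : ∀ x, 0 < x → deriv φ x = deriv p (ρ x) / (μ * ρ x) * deriv ρ x)
    (hφ'' : ∀ x, 0 < x → deriv (deriv φ) x = Hfun p μ a b ρp φp (ρ x))
    (hρ : Tendsto ρ atTop (𝓝 ρp)) (hφ : Tendsto φ atTop (𝓝 φp)) {x : ℝ} (hx : 0 < x) :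
    deriv φ x ^ 2 = Gfun p μ a b ρp φp (ρ x) := by
  set E := fun y => deriv φ y ^ 2 - Gfun p μ a b ρp φp (ρ y)
  have hE' : ∀ y, 0 < y → HasDerivAt E 0 y := fun y hy =>
    (((hφd' y hy).hasDerivAt.fun_pow 2).sub
      ((h.hasDerivAt_Gfun (hρpos y hy)).comp y (hρd y hy).hasDerivAt)).congr_deriv (by
        rw [hφ'' y hy, hφ' y hy]
        ring)
  obtain ⟨E₀, hE₀⟩ := isOpen_Ioi.exists_is_const_of_deriv_eq_zero isPreconnected_Ioi
    (fun y hy => (hE' y hy).differentiableAt.differentiableWithinAt) fun y hy => (hE' y hy).deriv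
  have hsq : Tendsto (fun y => deriv φ y ^ 2) atTop (𝓝 E₀) := by
    refine (by simpa using (h.tendsto_Gfun_comp hρ).const_add E₀ :
      Tendsto (fun y => E₀ + Gfun p μ a b ρp φp (ρ y)) atTop (𝓝 E₀)).congr' ?_
    filter_upwards [eventually_gt_atTop 0] with y hy
    have := hE₀ y hy
    simp only [E] at this
    linarith
  obtain ⟨c, hc, hc0⟩ := exists_tendsto_deriv_comp_zero hφ
    (by filter_upwards [eventually_gt_atTop 0] using hφd)
  have hE₀0 : E₀ = 0 :=
    tendsto_nhds_unique (hsq.comp hc) (by simpa [Function.comp_def] using hc0.pow 2)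
  have := hE₀ x hx
  simp only [E] at this
  linarith

lemma sub_mul_deriv_nonpos (hρpos : ∀ x, 0 < x → 0 < ρ x)
    (hφd : ∀ x, 0 < x → DifferentiableAt ℝ φ x)
    (hφd' : ∀ x, 0 < x → DifferentiableAt ℝ (deriv φ) x)
    (hφF : ∀ x, 0 ≤ x → φ x = Ffun p μ ρp (ρ x) + φp)
    (hφ'' : ∀ x, 0 < x → deriv (deriv φ) x = Hfun p μ a b ρp φp (ρ x))
    (hsq : ∀ x, 0 < x → deriv φ x ^ 2 = Gfun p μ a b ρp φp (ρ x))
    (hρ : Tendsto ρ atTop (𝓝 ρp)) (hφ : Tendsto φ atTop (𝓝 φp)) {x : ℝ} (hx : 0 < x) :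
    (φ x - φp) * deriv φ x ≤ 0 := by
  have hφ'lim : Tendsto (deriv φ) atTop (𝓝 0) := by
    have hsqrt : Tendsto (fun y => √(Gfun p μ a b ρp φp (ρ y))) atTop (𝓝 0) := by
      simpa using (h.tendsto_Gfun_comp hρ).sqrt
    rw [tendsto_zero_iff_abs_tendsto_zero]
    refine hsqrt.congr' ?_
    filter_upwards [eventually_gt_atTop 0] with y hy
    rw [← hsq y hy, Real.sqrt_sq_eq_abs, Function.comp_apply]
  refine sub_mul_deriv_nonpos_of_tendsto hφd hφd' (fun y hy => ?_) hφ hφ'lim hx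
  rw [hφ'' y hy, hφF y hy.le, add_sub_cancel_right]
  exact h.Ffun_mul_Hfun_nonneg (hρpos y hy)

lemma deriv_deriv_eq_Hfun {σ : ℝ} (hσ : σ * σ = 1) (hρd : ∀ x, 0 < x → DifferentiableAt ℝ ρ x)
    (hρpos : ∀ x, 0 < x → 0 < ρ x)
    (hρ' : ∀ x, 0 < x →
      deriv ρ x = σ * √(Gfun p μ a b ρp φp (ρ x)) / (deriv p (ρ x) / (μ * ρ x)))
    (hφ' : ∀ x, 0 < x → deriv φ x = σ * √(Gfun p μ a b ρp φp (ρ x))) {x : ℝ} (hx : 0 < x) :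
    deriv (deriv φ) x = Hfun p μ a b ρp φp (ρ x) := by
  by_cases hρx : ρ x = ρp
  · have hmin : IsLocalMin (fun y => σ * deriv φ y) x := by
      filter_upwards [Ioi_mem_nhds hx] with y hy
      rw [hφ' x hx, hφ' y hy, hρx, Gfun_self, Real.sqrt_zero, ← mul_assoc, ← mul_assoc, hσ,
        mul_zero, one_mul]
      exact Real.sqrt_nonneg _
    have hσφ'' := hmin.deriv_eq_zero
    rw [deriv_const_mul_field', mul_eq_zero] at hσφ''
    rw [hρx, h.Hfun_self]
    exact hσφ''.resolve_left (left_ne_zero_of_mul_eq_one hσ)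
  · have hG := h.Gfun_pos (hρpos x hx) hρx
    have hφ'' := (((h.hasDerivAt_Gfun (hρpos x hx)).comp x (hρd x hx).hasDerivAt).sqrt
      hG.ne').const_mul σ
    have hev : deriv φ =ᶠ[𝓝 x] fun y => σ * √(Gfun p μ a b ρp φp (ρ y)) := by
      filter_upwards [Ioi_mem_nhds hx] with y hy using hφ' y hy
    have hF' := (h.Fderiv_pos (hρpos x hx)).ne'
    have hsqrt := (Real.sqrt_pos.2 hG).ne'
    rw [hev.deriv_eq.trans hφ''.deriv, hρ' x hx, Function.comp_apply]
    generalize deriv p (ρ x) / (μ * ρ x) = f at hF' ⊢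
    field_simp
    linear_combination (Hfun p μ a b ρp φp (ρ x)) * hσ

theorem firstOrder_of_classical {φm ρm : ℝ} (hρm : 0 < ρm) (hFρm : Ffun p μ ρp ρm = φm - φp)
    (hρ1 : ContDiffOn ℝ 1 ρ (Ici 0)) (hφ2 : ContDiffOn ℝ 2 φ (Ici 0))
    (hρpos : ∀ x, 0 ≤ x → 0 < ρ x)
    (heq1 : ∀ x, 0 < x → deriv (fun y => p (ρ y)) x = μ * ρ x * deriv φ x)
    (heq2 : ∀ x, 0 < x → deriv (deriv φ) x + a * ρ x - b * φ x = 0)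
    (hφ0 : φ 0 = φm) (hρ : Tendsto ρ atTop (𝓝 ρp)) (hφ : Tendsto φ atTop (𝓝 φp)) :
    ρ 0 = ρm ∧ (∀ x, 0 ≤ x → φ x = Ffun p μ ρp (ρ x) + φp) ∧
      (φp < φm → ∀ x, 0 < x →
        deriv ρ x = -√(Gfun p μ a b ρp φp (ρ x)) / (deriv p (ρ x) / (μ * ρ x))) ∧
      (φm < φp → ∀ x, 0 < x →
        deriv ρ x = √(Gfun p μ a b ρp φp (ρ x)) / (deriv p (ρ x) / (μ * ρ x))) := by
  have hρd : ∀ x, 0 < x → DifferentiableAt ℝ ρ x := fun x hx =>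
    (hρ1.differentiableOn one_ne_zero).differentiableAt (Ici_mem_nhds hx)
  have hφd : ∀ x, 0 < x → DifferentiableAt ℝ φ x := fun x hx =>
    (hφ2.differentiableOn two_ne_zero).differentiableAt (Ici_mem_nhds hx)
  have hφd' : ∀ x, 0 < x → DifferentiableAt ℝ (deriv φ) x := fun x hx =>
    ((hφ2.mono Ioi_subset_Ici_self).deriv_of_isOpen isOpen_Ioi (m := 1) le_rfl
      |>.differentiableOn one_ne_zero).differentiableAt (Ioi_mem_nhds hx)
  have hφ' x (hx : 0 < x) := (h.deriv_comp_eq_iff (hρpos x hx.le) (hρd x hx)).1 (heq1 x hx)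
  have hφF x (hx : 0 ≤ x) := h.eq_Ffun_comp_add hρ1.continuousOn hρd hρpos hφ2.continuousOn hφd
    hφ' hρ hφ hx
  have hφ'' x (hx : 0 < x) : deriv (deriv φ) x = Hfun p μ a b ρp φp (ρ x) := by
    rw [Hfun, ← mul_add, ← hφF x hx.le]
    linarith [heq2 x hx]
  have hρpos' x (hx : 0 < x) := hρpos x hx.le
  have hsq x (hx : 0 < x) := h.deriv_sq_eq_Gfun hρd hρpos' hφd hφd' hφ' hφ'' hρ hφ hx
  have hmul x (hx : 0 < x) := h.sub_mul_deriv_nonpos hρpos' hφd hφd' hφF hφ'' hsq hρ hφ hx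
  have hρ' x (hx : 0 < x) : deriv ρ x = deriv φ x / (deriv p (ρ x) / (μ * ρ x)) := by
    rw [hφ' x hx, mul_div_cancel_left₀ _ (h.Fderiv_pos (hρpos x hx.le)).ne']
  refine ⟨?_, hφF, fun hlt x hx => ?_, fun hgt x hx => ?_⟩
  · refine h.strictMonoOn_Ffun.injOn (hρpos 0 le_rfl) hρm ?_
    rw [hFρm, ← hφ0, hφF 0 le_rfl, add_sub_cancel_right]
  · rw [hρ' x hx, ← hsq x hx, Real.sqrt_sq_eq_abs, abs_of_nonpos
      (deriv_nonpos_of_sub_mul_deriv_nonpos hφ2.continuousOn hφd (hφ0 ▸ hlt.le) hmul hx), neg_neg]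
  · rw [hρ' x hx, ← hsq x hx, Real.sqrt_sq_eq_abs, abs_of_nonneg
      (deriv_nonneg_of_sub_mul_deriv_nonpos hφ2.continuousOn hφd (hφ0 ▸ hgt.le) hmul hx)]

theorem classical_of_firstOrder {φm ρm σ : ℝ} (hσ : σ * σ = 1)
    (hFρm : Ffun p μ ρp ρm = φm - φp) (hρ1 : ContDiffOn ℝ 1 ρ (Ici 0))
    (hρpos : ∀ x, 0 ≤ x → 0 < ρ x) (hρ0 : ρ 0 = ρm) (hρ : Tendsto ρ atTop (𝓝 ρp))
    (hφF : ∀ x, 0 ≤ x → φ x = Ffun p μ ρp (ρ x) + φp)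
    (hρ' : ∀ x, 0 < x →
      deriv ρ x = σ * √(Gfun p μ a b ρp φp (ρ x)) / (deriv p (ρ x) / (μ * ρ x))) :
    (∀ x, 0 < x → deriv (fun y => p (ρ y)) x = μ * ρ x * deriv φ x) ∧
      (∀ x, 0 < x → deriv (deriv φ) x + a * ρ x - b * φ x = 0) ∧
      φ 0 = φm ∧ Tendsto φ atTop (𝓝 φp) := by
  have hρd : ∀ x, 0 < x → DifferentiableAt ℝ ρ x := fun x hx =>
    (hρ1.differentiableOn one_ne_zero).differentiableAt (Ici_mem_nhds hx)
  have hφ'F x (hx : 0 < x) : deriv φ x = deriv p (ρ x) / (μ * ρ x) * deriv ρ x := by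
    have hev : φ =ᶠ[𝓝 x] fun y => Ffun p μ ρp (ρ y) + φp := by
      filter_upwards [Ioi_mem_nhds hx] with y hy using hφF y hy.le
    rw [hev.deriv_eq]
    exact (((h.hasDerivAt_Ffun (hρpos x hx.le)).comp x (hρd x hx).hasDerivAt).add_const φp).deriv
  have hφ' x (hx : 0 < x) : deriv φ x = σ * √(Gfun p μ a b ρp φp (ρ x)) := by
    rw [hφ'F x hx, hρ' x hx, mul_div_cancel₀ _ (h.Fderiv_pos (hρpos x hx.le)).ne']
  refine ⟨fun x hx => (h.deriv_comp_eq_iff (hρpos x hx.le) (hρd x hx)).2 (hφ'F x hx),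
    fun x hx => ?_, by rw [hφF 0 le_rfl, hρ0, hFρm, sub_add_cancel], ?_⟩
  · rw [h.deriv_deriv_eq_Hfun hσ hρd (fun x hx => hρpos x hx.le) hρ' hφ' hx, hφF x hx.le, Hfun]
    ring
  · refine (by simpa using (h.tendsto_Ffun_comp hρ).add_const φp :
      Tendsto (fun x => Ffun p μ ρp (ρ x) + φp) atTop (𝓝 φp)).congr' ?_
    filter_upwards [eventually_ge_atTop 0] with x hx using (hφF x hx).symm

end StationaryAssumptions

theorem stmt7_general (p : ℝ → ℝ) (μ a b ρp φp φm ρm : ℝ)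
    (hμ : 0 < μ) (ha : 0 < a) (hb : 0 < b)
    (hp3 : ContDiffOn ℝ 3 p (Set.Ioi 0))
    (hp' : ∀ ρ : ℝ, 0 < ρ → a * μ / b * ρ < deriv p ρ)
    (hρp : 0 < ρp) (hcomp : a * ρp = b * φp)
    (hne : φm ≠ φp)
    (hρm : 0 < ρm) (hFρm : Ffun p μ ρp ρm = φm - φp)
    (ρb φb : ℝ → ℝ)
    (hreg1 : ContDiffOn ℝ 1 ρb (Set.Ici 0))
    (hreg2 : ContDiffOn ℝ 2 φb (Set.Ici 0))
    (hpos : ∀ x : ℝ, 0 ≤ x → 0 < ρb x) :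
    ((∀ x : ℝ, 0 < x → deriv (fun y => p (ρb y)) x = μ * ρb x * deriv φb x) ∧
     (∀ x : ℝ, 0 < x → deriv (deriv φb) x + a * ρb x - b * φb x = 0) ∧
     φb 0 = φm ∧
     Tendsto ρb atTop (nhds ρp) ∧ Tendsto φb atTop (nhds φp))
    ↔
    (ρb 0 = ρm ∧
     Tendsto ρb atTop (nhds ρp) ∧
     (∀ x : ℝ, 0 ≤ x → φb x = Ffun p μ ρp (ρb x) + φp) ∧
     (φp < φm → ∀ x : ℝ, 0 < x →
        deriv ρb x =
          - Real.sqrt (Gfun p μ a b ρp φp (ρb x)) / (deriv p (ρb x) / (μ * ρb x))) ∧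
     (φm < φp → ∀ x : ℝ, 0 < x →
        deriv ρb x =
          Real.sqrt (Gfun p μ a b ρp φp (ρb x)) / (deriv p (ρb x) / (μ * ρb x)))) := by
  have h : StationaryAssumptions p μ a b ρp φp :=
    ⟨hμ, ha, hb, hp3.of_le (by norm_num), hp', hρp, hcomp⟩
  constructor
  · rintro ⟨heq1, heq2, hφ0, hρ, hφ⟩
    obtain ⟨hρ0, hφF, hdec, hinc⟩ :=
      h.firstOrder_of_classical hρm hFρm hreg1 hreg2 hpos heq1 heq2 hφ0 hρ hφ
    exact ⟨hρ0, hρ, hφF, hdec, hinc⟩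
  · rintro ⟨hρ0, hρ, hφF, hdec, hinc⟩
    obtain ⟨σ, hσ, hρ'⟩ : ∃ σ : ℝ, σ * σ = 1 ∧ ∀ x, 0 < x →
        deriv ρb x = σ * √(Gfun p μ a b ρp φp (ρb x)) / (deriv p (ρb x) / (μ * ρb x)) := by
      rcases hne.lt_or_gt with hlt | hgt
      · exact ⟨1, one_mul 1, fun x hx => by rw [hinc hlt x hx, one_mul]⟩
      · exact ⟨-1, by norm_num, fun x hx => by rw [hdec hgt x hx, neg_one_mul]⟩
    obtain ⟨heq1, heq2, hφ0, hφ⟩ :=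
      h.classical_of_firstOrder hσ hFρm hreg1 hpos hρ0 hρ hφF hρ'
    exact ⟨heq1, heq2, hφ0, hρ, hφ⟩

/-- For a pair `(ρ̄, φ̄)` with `ρ̄ ∈ C¹([0,∞))`, `φ̄ ∈ C²([0,∞))` and `ρ̄ > 0`, being a
classical solution of the stationary problem is equivalent to solving the first-order
problem `ρ̄(0) = ρ₋`, `ρ̄ → ρ₊`, `φ̄ = F(ρ̄) + φ₊`, `ρ̄' = ∓√(G(ρ̄))/F'(ρ̄)`. -/
theorem stmt7 (p : ℝ → ℝ) (μ a b ρp φp φm ρm : ℝ)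
    (hμ : 0 < μ) (ha : 0 < a) (hb : 0 < b)
    (hp3 : ContDiffOn ℝ 3 p (Set.Ioi 0))
    (hp' : ∀ ρ : ℝ, 0 < ρ → a * μ / b * ρ < deriv p ρ)
    (hρp : 0 < ρp) (hφp : 0 < φp) (hcomp : a * ρp = b * φp)
    (hne : φm ≠ φp) (hint : CondPlus p μ ρp φp φm)
    (hρm : 0 < ρm) (hFρm : Ffun p μ ρp ρm = φm - φp)
    (ρb φb : ℝ → ℝ)
    (hreg1 : ContDiffOn ℝ 1 ρb (Set.Ici 0))
    (hreg2 : ContDiffOn ℝ 2 φb (Set.Ici 0))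
    (hpos : ∀ x : ℝ, 0 ≤ x → 0 < ρb x) :
    ((∀ x : ℝ, 0 < x → deriv (fun y => p (ρb y)) x = μ * ρb x * deriv φb x) ∧
     (∀ x : ℝ, 0 < x → deriv (deriv φb) x + a * ρb x - b * φb x = 0) ∧
     φb 0 = φm ∧
     Tendsto ρb atTop (nhds ρp) ∧ Tendsto φb atTop (nhds φp))
    ↔
    (ρb 0 = ρm ∧
     Tendsto ρb atTop (nhds ρp) ∧
     (∀ x : ℝ, 0 ≤ x → φb x = Ffun p μ ρp (ρb x) + φp) ∧
     (φp < φm → ∀ x : ℝ, 0 < x →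
        deriv ρb x =
          - Real.sqrt (Gfun p μ a b ρp φp (ρb x)) / (deriv p (ρb x) / (μ * ρb x))) ∧
     (φm < φp → ∀ x : ℝ, 0 < x →
        deriv ρb x =
          Real.sqrt (Gfun p μ a b ρp φp (ρb x)) / (deriv p (ρb x) / (μ * ρb x)))) :=
  stmt7_general p μ a b ρp φp φm ρm hμ ha hb hp3 hp' hρp hcomp hne hρm hFρm ρb φb hreg1 hreg2 hpos
end
end

section
/- Assume φ₋ > φ₊, so that ρ₋ > ρ₊. The initial value problem ρ̄'(x) = 𝒟(ρ̄(x)) for x > 0 with ρ̄(0) = ρ₋ has a unique solution ρ̄ defined on all of [0,∞); it satisfies ρ₊ < ρ̄(x) ≤ ρ₋ and ρ̄'(x) < 0 for all x > 0, and ρ̄(x) → ρ₊ as x → +∞. -/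
open MeasureTheory Set Filter Topology

noncomputable section

/-- `𝒟(r) = -√(G(r)) / F'(r)` with `F'(r) = p'(r)/(μ r)`. -/
def Dfun (p : ℝ → ℝ) (μ a b ρp φp r : ℝ) : ℝ :=
  - Real.sqrt (Gfun p μ a b ρp φp r) / (deriv p r / (μ * r))

/-!
On `(ρ₊, ∞)` the field `𝒟 = -√G / F'` is continuous and negative: `H' = bF' - a > 0` and
`G' = 2F'H`, so `H` and then `G` increase from their zeros at `ρ₊`. An autonomous equation
`x' = f x` with such a field is solved by separation of variables: the solution inverts the strictly
decreasing time `T(r) = ∫_{x(0)}^r 1/f`, and any solution satisfies `T(x(t)) = t` while it stays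
in `(ρ₊, ∞)`. Since `G(s) = O((s - ρ₊)²)`, also `|𝒟(s)| = O(s - ρ₊)`, so `T(r) → ∞` as `r → ρ₊⁺`:
reaching `ρ₊` would take infinite time. This gives global existence, uniqueness, and `ρ̄ → ρ₊`.
-/

lemma ContinuousOn.hasDerivAt_integral {E : Type*} [NormedAddCommGroup E] [NormedSpace ℝ E]
    [CompleteSpace E] {g : ℝ → E} {s : Set ℝ} (hg : ContinuousOn g s) (hs : IsOpen s)
    (hs' : s.OrdConnected) {a x : ℝ} (ha : a ∈ s) (hx : x ∈ s) :
    HasDerivAt (fun x => ∫ τ in a..x, g τ) (g x) x :=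
  intervalIntegral.integral_hasDerivAt_right ((hg.mono (hs'.uIcc_subset ha hx)).intervalIntegrable)
    (hg.stronglyMeasurableAtFilter hs x hx) (hg.continuousAt (hs.mem_nhds hx))

namespace AutonomousODE

/-- Separation of variables: the time at which the solution of `x' = f x`, `x 0 = r₀`,
reaches `r`. -/
def odeTime (f : ℝ → ℝ) (r₀ r : ℝ) : ℝ :=
  ∫ τ in r₀..r, (f τ)⁻¹

def IsForwardSolution (f : ℝ → ℝ) (r₀ : ℝ) (x : ℝ → ℝ) : Prop :=
  ContinuousOn x (Ici 0) ∧ x 0 = r₀ ∧ ∀ t, 0 < t → HasDerivAt x (f (x t)) t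

variable {f x : ℝ → ℝ} {c r₀ : ℝ}

@[simp]
lemma odeTime_self : odeTime f r₀ r₀ = 0 :=
  intervalIntegral.integral_same

section
variable (hf : ContinuousOn f (Ioi c)) (hneg : ∀ r ∈ Ioi c, f r < 0) (hr₀ : c < r₀)
include hf hneg hr₀

lemma hasDerivAt_odeTime {r : ℝ} (hr : c < r) : HasDerivAt (odeTime f r₀) (f r)⁻¹ r :=
  (hf.inv₀ fun τ hτ => (hneg τ hτ).ne).hasDerivAt_integral isOpen_Ioi ordConnected_Ioi hr₀ hr

lemma continuousOn_odeTime : ContinuousOn (odeTime f r₀) (Ioi c) := fun _ hr =>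
  (hasDerivAt_odeTime hf hneg hr₀ hr).continuousAt.continuousWithinAt

lemma strictAntiOn_odeTime : StrictAntiOn (odeTime f r₀) (Ioi c) := by
  refine strictAntiOn_of_deriv_neg (convex_Ioi c) (continuousOn_odeTime hf hneg hr₀) fun r hr => ?_
  rw [interior_Ioi] at hr
  rw [(hasDerivAt_odeTime hf hneg hr₀ hr).deriv]
  exact inv_lt_zero.2 (hneg r hr)

lemma odeTime_nonneg {r : ℝ} (hr : r ∈ Ioc c r₀) : 0 ≤ odeTime f r₀ r := by
  simpa using (strictAntiOn_odeTime hf hneg hr₀).antitoneOn hr.1 hr₀ hr.2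

lemma tendsto_odeTime_atTop {K : ℝ} (hK : ∀ s ∈ Ioc c r₀, -f s ≤ K * (s - c)) :
    Tendsto (odeTime f r₀) (𝓝[>] c) atTop := by
  have hKpos : 0 < K := by
    have := hK r₀ ⟨hr₀, le_rfl⟩
    have := hneg r₀ hr₀
    exact pos_of_mul_pos_left (by linarith) (sub_pos.2 hr₀).le
  have hlower : ∀ r ∈ Ioo c r₀, K⁻¹ * (Real.log (r₀ - c) - Real.log (r - c)) ≤ odeTime f r₀ r := by
    intro r hr
    have hrc : 0 < r - c := sub_pos.2 hr.1
    have hint : ∫ s in r..r₀, (K * (s - c))⁻¹ = K⁻¹ * (Real.log (r₀ - c) - Real.log (r - c)) := by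
      simp_rw [mul_inv]
      rw [intervalIntegral.integral_const_mul, intervalIntegral.integral_comp_sub_right
        (fun s => s⁻¹), integral_inv_of_pos hrc (sub_pos.2 hr₀),
        Real.log_div (sub_pos.2 hr₀).ne' hrc.ne']
    rw [← hint, odeTime, intervalIntegral.integral_symm (a := r), ← intervalIntegral.integral_neg]
    refine intervalIntegral.integral_mono_on hr.2.le ?_ ?_ fun s hs => ?_
    · refine ContinuousOn.intervalIntegrable (ContinuousOn.inv₀ (by fun_prop) fun s hs => ?_)
      rw [uIcc_of_le hr.2.le] at hs
      exact (mul_pos hKpos (hrc.trans_le (sub_le_sub_right hs.1 c))).ne'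
    · exact ((hf.inv₀ fun τ hτ => (hneg τ hτ).ne).mono
        (ordConnected_Ioi.uIcc_subset hr.1 hr₀)).neg.intervalIntegrable
    · have hs' : c < s := hr.1.trans_le hs.1
      rw [← inv_neg]
      exact inv_anti₀ (neg_pos.2 (hneg s hs')) (hK s ⟨hs', hs.2⟩)
  have hlog : Tendsto (fun r => K⁻¹ * (Real.log (r₀ - c) - Real.log (r - c))) (𝓝[>] c) atTop := by
    refine Tendsto.const_mul_atTop (inv_pos.2 hKpos) (tendsto_atTop_add_const_left _ _ ?_)
    refine tendsto_neg_atBot_atTop.comp (Real.tendsto_log_nhdsGT_zero.comp ?_)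
    exact (Filter.map_subRight_nhdsGT (c := c) (a := c)).trans_le (by rw [sub_self])
  exact tendsto_atTop_mono' _ (eventually_of_mem (Ioo_mem_nhdsGT hr₀) hlower) hlog

lemma IsForwardSolution.odeTime_eq_of_forall_lt (hx : IsForwardSolution f r₀ x) {T : ℝ}
    (hT : 0 ≤ T) (hlt : ∀ s ∈ Icc 0 T, c < x s) : odeTime f r₀ (x T) = T := by
  rcases hT.eq_or_lt with rfl | hT
  · simp [hx.2.1]
  have hcont : ContinuousOn (fun s => odeTime f r₀ (x s) - s) (Icc 0 T) :=
    ((continuousOn_odeTime hf hneg hr₀).comp (hx.1.mono Icc_subset_Ici_self) hlt).sub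
      continuousOn_id
  have hderiv : ∀ s ∈ Ioo 0 T, HasDerivAt (fun s => odeTime f r₀ (x s) - s) 0 s := by
    intro s hs
    have hxs := hlt s (Ioo_subset_Icc_self hs)
    have := ((hasDerivAt_odeTime hf hneg hr₀ hxs).comp s (hx.2.2 s hs.1)).sub (hasDerivAt_id s)
    rwa [inv_mul_cancel₀ (hneg _ hxs).ne, sub_self] at this
  obtain ⟨s, -, hs⟩ := exists_hasDerivAt_eq_slope _ _ hT hcont hderiv
  rw [eq_div_iff (by linarith), zero_mul, hx.2.1, odeTime_self] at hs
  linarith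

section Inverse

/- `x` inverts `odeTime f r₀ : (c, r₀] → [0, ∞)` and is extended by `r₀` to negative times. -/
variable (hinv : ∀ t, x t ∈ Ioc c r₀ ∧ odeTime f r₀ (x t) = max t 0)
include hinv

lemma antitone_of_odeTime_eq : Antitone x := fun t₁ t₂ h => by
  by_contra! hlt
  have := strictAntiOn_odeTime hf hneg hr₀ (hinv t₁).1.1 (hinv t₂).1.1 hlt
  rw [(hinv t₁).2, (hinv t₂).2] at this
  exact this.not_ge (max_le_max_right 0 h)

lemma apply_odeTime_of_odeTime_eq {r : ℝ} (hr : r ∈ Ioc c r₀) : x (odeTime f r₀ r) = r :=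
  (strictAntiOn_odeTime hf hneg hr₀).injOn (hinv _).1.1 hr.1 <| by
    rw [(hinv _).2, max_eq_left (odeTime_nonneg hf hneg hr₀ hr)]

lemma neg_mem_image_of_odeTime_eq {r : ℝ} (hr : r ∈ Ioc c r₀) : -r ∈ (fun t => -x t) '' Ici 0 :=
  ⟨odeTime f r₀ r, odeTime_nonneg hf hneg hr₀ hr, by
    simp only [apply_odeTime_of_odeTime_eq hf hneg hr₀ hinv hr]⟩

lemma continuousAt_of_odeTime_eq {t : ℝ} (ht : 0 < t) : ContinuousAt x t := by
  have hxt : x t < r₀ := (hinv t).1.2.lt_of_ne fun h => by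
    have := (hinv t).2
    rw [h, odeTime_self, max_eq_left ht.le] at this
    exact ht.ne this
  have hmono : Monotone fun t => -x t := fun _ _ h =>
    neg_le_neg (antitone_of_odeTime_eq hf hneg hr₀ hinv h)
  have := continuousAt_of_monotoneOn_of_image_mem_nhds (hmono.monotoneOn univ) univ_mem <|
    mem_of_superset (Ioo_mem_nhds (neg_lt_neg hxt) (neg_lt_neg (hinv t).1.1)) fun y hy =>
      image_mono (subset_univ _) <| neg_neg y ▸
        neg_mem_image_of_odeTime_eq hf hneg hr₀ hinv ⟨lt_neg.1 hy.2, (neg_lt.1 hy.1).le⟩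
  simpa only [Pi.neg_def, neg_neg] using this.neg

lemma apply_zero_of_odeTime_eq : x 0 = r₀ := by
  simpa using apply_odeTime_of_odeTime_eq hf hneg hr₀ hinv ⟨hr₀, le_rfl⟩

lemma continuousWithinAt_zero_of_odeTime_eq : ContinuousWithinAt x (Ici 0) 0 := by
  have hmono : MonotoneOn (fun t => -x t) (Ici 0) := fun _ _ _ _ h =>
    neg_le_neg (antitone_of_odeTime_eq hf hneg hr₀ hinv h)
  have himage : (fun t => -x t) '' Ici 0 ∈ 𝓝[≥] (-x 0) := by
    rw [apply_zero_of_odeTime_eq hf hneg hr₀ hinv]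
    exact mem_of_superset (Ico_mem_nhdsGE (neg_lt_neg hr₀)) fun y hy => neg_neg y ▸
      neg_mem_image_of_odeTime_eq hf hneg hr₀ hinv ⟨lt_neg.1 hy.2, neg_le.1 hy.1⟩
  simpa only [Pi.neg_def, neg_neg] using
    (continuousWithinAt_right_of_monotoneOn_of_image_mem_nhdsWithin hmono self_mem_nhdsWithin
      himage).neg

lemma isForwardSolution_of_odeTime_eq : IsForwardSolution f r₀ x := by
  refine ⟨fun t ht => ?_, apply_zero_of_odeTime_eq hf hneg hr₀ hinv, fun t ht => ?_⟩
  · rcases (mem_Ici.1 ht).eq_or_lt with rfl | ht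
    · exact continuousWithinAt_zero_of_odeTime_eq hf hneg hr₀ hinv
    · exact (continuousAt_of_odeTime_eq hf hneg hr₀ hinv ht).continuousWithinAt
  · have hxt := (hinv t).1.1
    have := (hasDerivAt_odeTime hf hneg hr₀ hxt).of_local_left_inverse
      (continuousAt_of_odeTime_eq hf hneg hr₀ hinv ht) (inv_ne_zero (hneg _ hxt).ne)
      (eventually_of_mem (Ioi_mem_nhds ht) fun s hs => by rw [(hinv s).2, max_eq_left hs.le])
    rwa [inv_inv] at this

lemma tendsto_of_odeTime_eq : Tendsto x atTop (𝓝 c) := by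
  refine tendsto_order.2 ⟨fun a ha => Eventually.of_forall fun t => ha.trans (hinv t).1.1,
    fun a ha => ?_⟩
  have hr : min a r₀ ∈ Ioc c r₀ := ⟨lt_min ha hr₀, min_le_right _ _⟩
  filter_upwards [eventually_gt_atTop (odeTime f r₀ (min a r₀))] with t ht
  refine lt_of_lt_of_le ?_ (min_le_left a r₀)
  by_contra! hle
  have := (strictAntiOn_odeTime hf hneg hr₀).antitoneOn hr.1 (hinv t).1.1 hle
  rw [(hinv t).2, max_eq_left ((odeTime_nonneg hf hneg hr₀ hr).trans ht.le)] at this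
  linarith

end Inverse

variable (hblow : Tendsto (odeTime f r₀) (𝓝[>] c) atTop)
include hblow

lemma exists_odeTime_eq {t : ℝ} (ht : 0 ≤ t) : ∃ r ∈ Ioc c r₀, odeTime f r₀ r = t := by
  obtain ⟨r₁, hr₁t, hr₁⟩ := ((hblow.eventually_gt_atTop t).and (Ioo_mem_nhdsGT hr₀)).exists
  obtain ⟨r, hr, hrt⟩ := intermediate_value_Icc' hr₁.2.le
    ((continuousOn_odeTime hf hneg hr₀).mono fun r hr => hr₁.1.trans_le hr.1)
    ⟨by simpa using ht, hr₁t.le⟩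
  exact ⟨r, ⟨hr₁.1.trans_le hr.1, hr.2⟩, hrt⟩

theorem exists_isForwardSolution : ∃ x, IsForwardSolution f r₀ x ∧
    (∀ t, 0 < t → c < x t ∧ x t ≤ r₀ ∧ deriv x t < 0) ∧ Tendsto x atTop (𝓝 c) := by
  choose x hx using fun t => exists_odeTime_eq hf hneg hr₀ hblow (le_max_right t 0)
  have hsol := isForwardSolution_of_odeTime_eq hf hneg hr₀ hx
  refine ⟨x, hsol, fun t ht => ⟨(hx t).1.1, (hx t).1.2, ?_⟩, tendsto_of_odeTime_eq hf hneg hr₀ hx⟩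
  rw [(hsol.2.2 t ht).deriv]
  exact hneg _ (hx t).1.1

namespace IsForwardSolution

variable (hx : IsForwardSolution f r₀ x)
include hx

lemma lt_apply {t : ℝ} (ht : 0 ≤ t) : c < x t := by
  by_contra! hle
  set S := {s ∈ Icc 0 t | x s ≤ c}
  have hSbdd : BddBelow S := ⟨0, fun s hs => hs.1.1⟩
  have hS : IsClosed S :=
    (hx.1.mono Icc_subset_Ici_self).preimage_isClosed_of_isClosed isClosed_Icc isClosed_Iic
  have hmem : sInf S ∈ S := hS.csInf_mem ⟨t, ⟨ht, le_rfl⟩, hle⟩ hSbdd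
  set t₁ := sInf S
  have hbefore : ∀ s ∈ Ico 0 t₁, c < x s := fun s hs => by
    by_contra! h
    exact (csInf_le hSbdd ⟨⟨hs.1, hs.2.le.trans hmem.1.2⟩, h⟩).not_gt hs.2
  have ht₁ : 0 < t₁ := hmem.1.1.lt_of_ne fun h => by
    have := hmem.2
    rw [← h, hx.2.1] at this
    linarith
  -- `x` reaches `c` at `t₁`, which would take infinite time
  have hxt₁ : Tendsto x (𝓝[<] t₁) (𝓝 (x t₁)) :=
    (hx.2.2 t₁ ht₁).continuousAt.tendsto.mono_left nhdsWithin_le_nhds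
  have habove : ∀ᶠ s in 𝓝[<] t₁, c < x s :=
    eventually_of_mem (Ioo_mem_nhdsLT ht₁) fun s hs => hbefore s ⟨hs.1.le, hs.2⟩
  have hxc : x t₁ = c := le_antisymm hmem.2 (ge_of_tendsto hxt₁ (habove.mono fun _ h => h.le))
  have hlim : Tendsto (fun s => odeTime f r₀ (x s)) (𝓝[<] t₁) atTop :=
    hblow.comp (tendsto_nhdsWithin_iff.2 ⟨hxc ▸ hxt₁, habove⟩)
  have htime : ∀ᶠ s in 𝓝[<] t₁, odeTime f r₀ (x s) < t₁ :=
    eventually_of_mem (Ioo_mem_nhdsLT ht₁) fun s hs => by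
      rw [hx.odeTime_eq_of_forall_lt hf hneg hr₀ hs.1.le fun u hu =>
        hbefore u ⟨hu.1, hu.2.trans_lt hs.2⟩]
      exact hs.2
  obtain ⟨s, h₁, h₂⟩ := ((hlim.eventually_gt_atTop t₁).and htime).exists
  exact h₁.not_gt h₂

lemma eqOn {y : ℝ → ℝ} (hy : IsForwardSolution f r₀ y) : EqOn x y (Ici 0) := fun t ht =>
  (strictAntiOn_odeTime hf hneg hr₀).injOn (hx.lt_apply hf hneg hr₀ hblow ht)
    (hy.lt_apply hf hneg hr₀ hblow ht) <| by
      rw [hx.odeTime_eq_of_forall_lt hf hneg hr₀ ht fun _ hs => hx.lt_apply hf hneg hr₀ hblow hs.1,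
        hy.odeTime_eq_of_forall_lt hf hneg hr₀ ht fun _ hs => hy.lt_apply hf hneg hr₀ hblow hs.1]

end IsForwardSolution

end

end AutonomousODE

open AutonomousODE

section Profile

variable {p : ℝ → ℝ} {μ a b ρp φp : ℝ}

lemma deriv_div_mul_pos (hF' : ∀ s, 0 < s → a < b * (deriv p s / (μ * s))) (ha : 0 < a)
    (hb : 0 < b) {s : ℝ} (hs : 0 < s) : 0 < deriv p s / (μ * s) :=
  pos_of_mul_pos_right (ha.trans (hF' s hs)) hb.le

lemma hasDerivAt_Ffun (hg : ContinuousOn (fun s => deriv p s / (μ * s)) (Ioi 0)) (hρp : 0 < ρp)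
    {s : ℝ} (hs : 0 < s) : HasDerivAt (Ffun p μ ρp) (deriv p s / (μ * s)) s :=
  hg.hasDerivAt_integral isOpen_Ioi ordConnected_Ioi hρp hs

lemma strictMonoOn_Ffun (hg : ContinuousOn (fun s => deriv p s / (μ * s)) (Ioi 0))
    (hF' : ∀ s, 0 < s → a < b * (deriv p s / (μ * s))) (ha : 0 < a) (hb : 0 < b) (hρp : 0 < ρp) :
    StrictMonoOn (Ffun p μ ρp) (Ioi 0) := by
  refine strictMonoOn_of_deriv_pos (convex_Ioi 0) (fun x hx =>
    (hasDerivAt_Ffun hg hρp hx).continuousAt.continuousWithinAt) fun x hx => ?_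
  rw [interior_Ioi] at hx
  rw [(hasDerivAt_Ffun hg hρp hx).deriv]
  exact deriv_div_mul_pos hF' ha hb hx

lemma hasDerivAt_Hfun (hg : ContinuousOn (fun s => deriv p s / (μ * s)) (Ioi 0)) (hρp : 0 < ρp)
    {s : ℝ} (hs : 0 < s) :
    HasDerivAt (Hfun p μ a b ρp φp) (b * (deriv p s / (μ * s)) - a) s := by
  have := (((hasDerivAt_Ffun hg hρp hs).const_mul b).add_const (b * φp)).sub
    ((hasDerivAt_id s).const_mul a)
  rwa [mul_one] at this

lemma Hfun_self (hcomp : a * ρp = b * φp) : Hfun p μ a b ρp φp ρp = 0 := by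
  simp [Hfun, Ffun, hcomp]

lemma Hfun_pos (hg : ContinuousOn (fun s => deriv p s / (μ * s)) (Ioi 0))
    (hF' : ∀ s, 0 < s → a < b * (deriv p s / (μ * s))) (hρp : 0 < ρp) (hcomp : a * ρp = b * φp)
    {s : ℝ} (hs : ρp < s) : 0 < Hfun p μ a b ρp φp s := by
  have hmono : StrictMonoOn (Hfun p μ a b ρp φp) (Ici ρp) := by
    refine strictMonoOn_of_deriv_pos (convex_Ici ρp) (fun x hx =>
      (hasDerivAt_Hfun hg hρp (hρp.trans_le hx)).continuousAt.continuousWithinAt) fun x hx => ?_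
    rw [interior_Ici] at hx
    rw [(hasDerivAt_Hfun hg hρp (hρp.trans hx)).deriv, sub_pos]
    exact hF' x (hρp.trans hx)
  simpa [Hfun_self hcomp] using hmono (mem_Ici.2 le_rfl) hs.le hs

lemma Hfun_nonneg (hg : ContinuousOn (fun s => deriv p s / (μ * s)) (Ioi 0))
    (hF' : ∀ s, 0 < s → a < b * (deriv p s / (μ * s))) (hρp : 0 < ρp) (hcomp : a * ρp = b * φp)
    {s : ℝ} (hs : ρp ≤ s) : 0 ≤ Hfun p μ a b ρp φp s := by
  rcases hs.eq_or_lt with rfl | hs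
  · exact (Hfun_self hcomp).ge
  · exact (Hfun_pos hg hF' hρp hcomp hs).le

lemma hasDerivAt_Gfun (hg : ContinuousOn (fun s => deriv p s / (μ * s)) (Ioi 0)) (hρp : 0 < ρp)
    {s : ℝ} (hs : 0 < s) :
    HasDerivAt (Gfun p μ a b ρp φp) (2 * (deriv p s / (μ * s)) * Hfun p μ a b ρp φp s) s :=
  ((continuousOn_const.mul hg).mul fun _ hx =>
      (hasDerivAt_Hfun hg hρp hx).continuousAt.continuousWithinAt).hasDerivAt_integral
    isOpen_Ioi ordConnected_Ioi hρp hs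

lemma Gfun_pos (hg : ContinuousOn (fun s => deriv p s / (μ * s)) (Ioi 0))
    (hF' : ∀ s, 0 < s → a < b * (deriv p s / (μ * s))) (ha : 0 < a) (hb : 0 < b) (hρp : 0 < ρp)
    (hcomp : a * ρp = b * φp) {s : ℝ} (hs : ρp < s) : 0 < Gfun p μ a b ρp φp s := by
  have hmono : StrictMonoOn (Gfun p μ a b ρp φp) (Ici ρp) := by
    refine strictMonoOn_of_deriv_pos (convex_Ici ρp) (fun x hx =>
      (hasDerivAt_Gfun hg hρp (hρp.trans_le hx)).continuousAt.continuousWithinAt) fun x hx => ?_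
    rw [interior_Ici] at hx
    have hx0 := hρp.trans hx
    rw [(hasDerivAt_Gfun hg hρp hx0).deriv]
    have := deriv_div_mul_pos hF' ha hb hx0
    have := Hfun_pos hg hF' hρp hcomp hx
    positivity
  simpa [Gfun] using hmono (mem_Ici.2 le_rfl) hs.le hs

lemma Hfun_le_mul (hg : ContinuousOn (fun s => deriv p s / (μ * s)) (Ioi 0)) (ha : 0 < a)
    (hb : 0 < b) (hρp : 0 < ρp) (hcomp : a * ρp = b * φp) {r M : ℝ}
    (hM : ∀ x ∈ Icc ρp r, deriv p x / (μ * x) ≤ M) :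
    ∀ s ∈ Icc ρp r, Hfun p μ a b ρp φp s ≤ b * M * (s - ρp) := by
  refine image_le_of_deriv_right_le_deriv_boundary (fun x hx =>
      (hasDerivAt_Hfun hg hρp (hρp.trans_le hx.1)).continuousAt.continuousWithinAt)
    (fun x hx => (hasDerivAt_Hfun hg hρp (hρp.trans_le hx.1)).hasDerivWithinAt)
    (by simp [Hfun_self hcomp]) (by fun_prop) (B' := fun _ => b * M)
    (fun x _ => by
      simpa using (((hasDerivAt_id x).sub_const ρp).const_mul (b * M)).hasDerivWithinAt)
    fun x hx => ?_
  have := mul_le_mul_of_nonneg_left (hM x (Ico_subset_Icc_self hx)) hb.le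
  linarith

lemma Gfun_le_mul_sq (hg : ContinuousOn (fun s => deriv p s / (μ * s)) (Ioi 0))
    (hF' : ∀ s, 0 < s → a < b * (deriv p s / (μ * s))) (ha : 0 < a) (hb : 0 < b) (hρp : 0 < ρp)
    (hcomp : a * ρp = b * φp) (r : ℝ) :
    ∃ K, ∀ s ∈ Icc ρp r, Gfun p μ a b ρp φp s ≤ K * (s - ρp) ^ 2 := by
  have hpos : Icc ρp r ⊆ Ioi 0 := fun x hx => hρp.trans_le hx.1
  obtain ⟨M, hM⟩ := isCompact_Icc.exists_bound_of_continuousOn (hg.mono hpos)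
  have hgM : ∀ x ∈ Icc ρp r, deriv p x / (μ * x) ≤ M := fun x hx =>
    (le_abs_self _).trans (hM x hx)
  refine ⟨b * M ^ 2, image_le_of_deriv_right_le_deriv_boundary (fun x hx =>
      (hasDerivAt_Gfun hg hρp (hpos hx)).continuousAt.continuousWithinAt)
    (fun x hx => (hasDerivAt_Gfun hg hρp (hpos (Ico_subset_Icc_self hx))).hasDerivWithinAt)
    (by simp [Gfun]) (by fun_prop) (B' := fun x => 2 * (b * M ^ 2) * (x - ρp))
    (fun x _ => ?_) fun x hx => ?_⟩
  · have := (((hasDerivAt_id' x).sub_const ρp).pow 2).const_mul (b * M ^ 2)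
    exact (this.congr_deriv (by push_cast; ring)).hasDerivWithinAt
  · have hx' := Ico_subset_Icc_self hx
    have := Hfun_nonneg hg hF' hρp hcomp hx.1
    have : 0 ≤ M := (norm_nonneg _).trans (hM x hx')
    calc 2 * (deriv p x / (μ * x)) * Hfun p μ a b ρp φp x
        ≤ 2 * M * (b * M * (x - ρp)) := by
          gcongr
          · exact hgM x hx'
          · exact Hfun_le_mul hg ha hb hρp hcomp hgM x hx'
      _ = 2 * (b * M ^ 2) * (x - ρp) := by ring

lemma continuousOn_Dfun (hg : ContinuousOn (fun s => deriv p s / (μ * s)) (Ioi 0))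
    (hF' : ∀ s, 0 < s → a < b * (deriv p s / (μ * s))) (ha : 0 < a) (hb : 0 < b) (hρp : 0 < ρp) :
    ContinuousOn (Dfun p μ a b ρp φp) (Ioi ρp) := by
  have hsub : Ioi ρp ⊆ Ioi 0 := Ioi_subset_Ioi hρp.le
  refine ContinuousOn.div (fun x hx => ?_) (hg.mono hsub) fun x hx =>
    (deriv_div_mul_pos hF' ha hb (hsub hx)).ne'
  exact (hasDerivAt_Gfun hg hρp (hsub hx)).continuousAt.sqrt.neg.continuousWithinAt

lemma Dfun_neg (hg : ContinuousOn (fun s => deriv p s / (μ * s)) (Ioi 0))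
    (hF' : ∀ s, 0 < s → a < b * (deriv p s / (μ * s))) (ha : 0 < a) (hb : 0 < b) (hρp : 0 < ρp)
    (hcomp : a * ρp = b * φp) {s : ℝ} (hs : ρp < s) : Dfun p μ a b ρp φp s < 0 :=
  div_neg_of_neg_of_pos (neg_neg_of_pos (Real.sqrt_pos.2 (Gfun_pos hg hF' ha hb hρp hcomp hs)))
    (deriv_div_mul_pos hF' ha hb (hρp.trans hs))

lemma neg_Dfun_le (hg : ContinuousOn (fun s => deriv p s / (μ * s)) (Ioi 0))
    (hF' : ∀ s, 0 < s → a < b * (deriv p s / (μ * s))) (ha : 0 < a) (hb : 0 < b) (hρp : 0 < ρp)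
    (hcomp : a * ρp = b * φp) (r : ℝ) :
    ∃ K, ∀ s ∈ Ioc ρp r, -Dfun p μ a b ρp φp s ≤ K * (s - ρp) := by
  obtain ⟨K, hK⟩ := Gfun_le_mul_sq hg hF' ha hb hρp hcomp r
  refine ⟨√K * (b / a), fun s hs => ?_⟩
  have hs0 : 0 < s := hρp.trans hs.1
  have hsqrt : √(Gfun p μ a b ρp φp s) ≤ √K * (s - ρp) := by
    calc √(Gfun p μ a b ρp φp s) ≤ √(K * (s - ρp) ^ 2) :=
          Real.sqrt_le_sqrt (hK s (Ioc_subset_Icc_self hs))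
      _ = √K * (s - ρp) := by
          rw [Real.sqrt_mul' _ (sq_nonneg _), Real.sqrt_sq (sub_pos.2 hs.1).le]
  have hg_inv : (deriv p s / (μ * s))⁻¹ ≤ b / a := by
    rw [inv_le_comm₀ (deriv_div_mul_pos hF' ha hb hs0) (div_pos hb ha), inv_div,
      div_le_iff₀' hb]
    exact (hF' s hs0).le
  calc -Dfun p μ a b ρp φp s = √(Gfun p μ a b ρp φp s) * (deriv p s / (μ * s))⁻¹ := by
        rw [Dfun, neg_div, neg_neg, div_eq_mul_inv]
    _ ≤ √K * (s - ρp) * (b / a) := mul_le_mul hsqrt hg_inv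
          (inv_nonneg.2 (deriv_div_mul_pos hF' ha hb hs0).le)
          (mul_nonneg (Real.sqrt_nonneg _) (sub_pos.2 hs.1).le)
    _ = √K * (b / a) * (s - ρp) := by ring

end Profile

theorem stmt19_general (p : ℝ → ℝ) (μ a b ρp φp φm ρm : ℝ)
    (hμ : 0 < μ) (ha : 0 < a) (hb : 0 < b)
    (hp3 : ContDiffOn ℝ 3 p (Set.Ioi 0))
    (hp' : ∀ ρ : ℝ, 0 < ρ → a * μ / b * ρ < deriv p ρ)
    (hρp : 0 < ρp) (hcomp : a * ρp = b * φp)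
    (hφ : φp < φm)
    (hρm : 0 < ρm) (hFρm : Ffun p μ ρp ρm = φm - φp) :
    ρp < ρm ∧
    (∃ ρb : ℝ → ℝ,
      (ContinuousOn ρb (Set.Ici 0) ∧ ρb 0 = ρm ∧
        (∀ x : ℝ, 0 < x → HasDerivAt ρb (Dfun p μ a b ρp φp (ρb x)) x)) ∧
      (∀ x : ℝ, 0 < x → ρp < ρb x ∧ ρb x ≤ ρm ∧ deriv ρb x < 0) ∧
      Tendsto ρb atTop (nhds ρp)) ∧
    (∀ ρ1 ρ2 : ℝ → ℝ,
      (ContinuousOn ρ1 (Set.Ici 0) ∧ ρ1 0 = ρm ∧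
        (∀ x : ℝ, 0 < x → HasDerivAt ρ1 (Dfun p μ a b ρp φp (ρ1 x)) x)) →
      (ContinuousOn ρ2 (Set.Ici 0) ∧ ρ2 0 = ρm ∧
        (∀ x : ℝ, 0 < x → HasDerivAt ρ2 (Dfun p μ a b ρp φp (ρ2 x)) x)) →
      Set.EqOn ρ1 ρ2 (Set.Ici 0)) := by
  have hg : ContinuousOn (fun s => deriv p s / (μ * s)) (Ioi 0) :=
    (hp3.continuousOn_deriv_of_isOpen isOpen_Ioi (by norm_num)).div (by fun_prop)
      fun s hs => (mul_pos hμ hs).ne'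
  have hF' : ∀ s, 0 < s → a < b * (deriv p s / (μ * s)) := fun s hs => by
    rw [← mul_div_assoc, lt_div_iff₀ (by positivity)]
    calc a * (μ * s) = a * μ / b * s * b := by field_simp
      _ < deriv p s * b := by gcongr; exact hp' s hs
      _ = b * deriv p s := mul_comm _ _
  have hρpm : ρp < ρm := by
    refine ((strictMonoOn_Ffun hg hF' ha hb hρp).lt_iff_lt hρp hρm).1 ?_
    rw [hFρm, Ffun, intervalIntegral.integral_same]
    linarith
  have hD := continuousOn_Dfun hg hF' ha hb hρp (φp := φp)
  have hneg : ∀ r ∈ Ioi ρp, Dfun p μ a b ρp φp r < 0 := fun _ hr =>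
    Dfun_neg hg hF' ha hb hρp hcomp hr
  obtain ⟨K, hK⟩ := neg_Dfun_le hg hF' ha hb hρp hcomp ρm
  have hblow := tendsto_odeTime_atTop hD hneg hρpm hK
  exact ⟨hρpm, exists_isForwardSolution hD hneg hρpm hblow, fun _ _ h₁ h₂ =>
    IsForwardSolution.eqOn hD hneg hρpm hblow h₁ h₂⟩

/-- When `φ₋ > φ₊` (so `ρ₋ > ρ₊`), the initial value problem `ρ̄' = 𝒟(ρ̄)` on `(0,∞)`,
`ρ̄(0) = ρ₋`, has a unique global solution on `[0,∞)`; it satisfies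
`ρ₊ < ρ̄(x) ≤ ρ₋` and `ρ̄'(x) < 0` for `x > 0`, and `ρ̄(x) → ρ₊` as `x → +∞`. -/
theorem stmt19 (p : ℝ → ℝ) (μ a b ρp φp φm ρm : ℝ)
    (hμ : 0 < μ) (ha : 0 < a) (hb : 0 < b)
    (hp3 : ContDiffOn ℝ 3 p (Set.Ioi 0))
    (hp' : ∀ ρ : ℝ, 0 < ρ → a * μ / b * ρ < deriv p ρ)
    (hρp : 0 < ρp) (hφp : 0 < φp) (hcomp : a * ρp = b * φp)
    (hφ : φp < φm) (hint : CondPlus p μ ρp φp φm)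
    (hρm : 0 < ρm) (hFρm : Ffun p μ ρp ρm = φm - φp) :
    ρp < ρm ∧
    (∃ ρb : ℝ → ℝ,
      (ContinuousOn ρb (Set.Ici 0) ∧ ρb 0 = ρm ∧
        (∀ x : ℝ, 0 < x → HasDerivAt ρb (Dfun p μ a b ρp φp (ρb x)) x)) ∧
      (∀ x : ℝ, 0 < x → ρp < ρb x ∧ ρb x ≤ ρm ∧ deriv ρb x < 0) ∧
      Tendsto ρb atTop (nhds ρp)) ∧
    (∀ ρ1 ρ2 : ℝ → ℝ,
      (ContinuousOn ρ1 (Set.Ici 0) ∧ ρ1 0 = ρm ∧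
        (∀ x : ℝ, 0 < x → HasDerivAt ρ1 (Dfun p μ a b ρp φp (ρ1 x)) x)) →
      (ContinuousOn ρ2 (Set.Ici 0) ∧ ρ2 0 = ρm ∧
        (∀ x : ℝ, 0 < x → HasDerivAt ρ2 (Dfun p μ a b ρp φp (ρ2 x)) x)) →
      Set.EqOn ρ1 ρ2 (Set.Ici 0)) :=
  stmt19_general p μ a b ρp φp φm ρm hμ ha hb hp3 hp' hρp hcomp hφ hρm hFρm

end
end
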